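/- The justification regularity rule JReg is not validity preserving in the class of full LP_CS algebras: for CS = {c:(p∧p→p)}, the equivalence (p∧p→p) ↔ ⊤ is valid in all full LP_CS algebras, but c:(p∧p→p) ↔ c:⊤ is not valid (it fails in the two-element full LP_CS algebra 2_{LP_CS}). -/
import Mathlib


/-- Proof terms of the logic of proofs LP. -/
inductive Tm : Type where
  | var : ℕ → Tm
  | const : ℕ → Tm
  | app : Tm → Tm → Tm
  | sum : Tm → Tm → Tm
  | bang : Tm → Tm

/-- Formulas of LP. -/
inductive Fm : Type where
  | prop : ℕ → Fm
  | bot : Fm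
  | neg : Fm → Fm
  | or : Fm → Fm → Fm
  | box : Tm → Fm → Fm

def Fm.imp (φ ψ : Fm) : Fm := .or (.neg φ) ψ
def Fm.and (φ ψ : Fm) : Fm := .neg (.or (.neg φ) (.neg ψ))
def Fm.iff (φ ψ : Fm) : Fm := (φ.imp ψ).and (ψ.imp φ)
def Fm.top : Fm := .neg .bot

/-- Axioms of LP: the propositional axioms PL1–PL5 plus Appl, Sum, jT, j4. -/
inductive LPAxiom : Fm → Prop where
  | pl1 (φ ψ : Fm) : LPAxiom (φ.imp (.or φ ψ))
  | pl2 (φ ψ : Fm) : LPAxiom ((Fm.or φ ψ).imp (.or ψ φ))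
  | pl3 (φ : Fm) : LPAxiom ((Fm.or φ φ).imp φ)
  | pl4 (φ ψ χ : Fm) : LPAxiom ((φ.imp ψ).imp ((Fm.or χ φ).imp (.or χ ψ)))
  | pl5 (φ : Fm) : LPAxiom (Fm.bot.imp φ)
  | appl (s t : Tm) (φ ψ : Fm) :
      LPAxiom ((Fm.box s (φ.imp ψ)).imp ((Fm.box t φ).imp (.box (.app s t) ψ)))
  | sum (s t : Tm) (φ : Fm) : LPAxiom (((Fm.box s φ).or (.box t φ)).imp (.box (.sum s t) φ))
  | jT (t : Tm) (φ : Fm) : LPAxiom ((Fm.box t φ).imp φ)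
  | j4 (t : Tm) (φ : Fm) : LPAxiom ((Fm.box t φ).imp (.box (.bang t) (.box t φ)))

/-- A constant specification: a set of pairs (c, φ) representing formulas c:φ. -/
abbrev ConstSpec := Set (ℕ × Fm)

/-- CS is a genuine constant specification: it only justifies axiom instances. -/
def ConstSpec.IsCS (CS : ConstSpec) : Prop := ∀ p ∈ CS, LPAxiom p.2

/-- CS is axiomatically appropriate: every axiom instance is justified by some constant. -/
def ConstSpec.AxApp (CS : ConstSpec) : Prop := ∀ φ, LPAxiom φ → ∃ c, (c, φ) ∈ CS

/-- Derivability in LP_CS from a set Γ of hypotheses; the only rule is modus ponens. -/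
inductive Deriv (CS : ConstSpec) (Γ : Set Fm) : Fm → Prop where
  | ax {φ} : LPAxiom φ → Deriv CS Γ φ
  | cs {c φ} : (c, φ) ∈ CS → Deriv CS Γ (.box (.const c) φ)
  | hyp {φ} : φ ∈ Γ → Deriv CS Γ φ
  | mp {φ ψ} : Deriv CS Γ (φ.imp ψ) → Deriv CS Γ φ → Deriv CS Γ ψ

/-- Extension of a valuation θ to all formulas, given functions □_t : Fm → A
(θ̃(t:φ) = □_t(φ)). -/
def evalFm {A : Type*} [BooleanAlgebra A] (box : Tm → Fm → A) (θ : ℕ → A) : Fm → A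
  | .prop p => θ p
  | .bot => ⊥
  | .neg φ => (evalFm box θ φ)ᶜ
  | .or φ ψ => evalFm box θ φ ⊔ evalFm box θ ψ
  | .box t φ => box t φ

/-- The conditions for functions □_t : Fm → A on a Boolean algebra A to form a
full LP_CS algebra: Al-Appl, Al-Sum, Al-j4, Al-CS and Al-jT. -/
structure IsFullLP (CS : ConstSpec) {A : Type*} [BooleanAlgebra A]
    (box : Tm → Fm → A) : Prop where
  appl : ∀ (s t : Tm) (φ ψ : Fm), box s (φ.imp ψ) ⊓ box t φ ≤ box (.app s t) ψ
  sum : ∀ (s t : Tm) (φ : Fm), box s φ ⊔ box t φ ≤ box (.sum s t) φ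
  j4 : ∀ (t : Tm) (φ : Fm), box t φ ≤ box (.bang t) (.box t φ)
  cs : ∀ (c : ℕ) (φ : Fm), (c, φ) ∈ CS → box (.const c) φ = ⊤
  jT : ∀ (θ : ℕ → A) (t : Tm) (φ : Fm), box t φ ≤ evalFm box θ φ

/-- The formula p ∧ p → p. -/
def phi0 : Fm := ((Fm.prop 0).and (Fm.prop 0)).imp (Fm.prop 0)

/-- The constant specification CS = {c : (p ∧ p → p)} with c the constant 0. -/
def CS0 : ConstSpec := {(0, phi0)}

/-- Validity in all full LP_CS algebras (with ∇ = {1}). -/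
def FullValid (CS : ConstSpec) (φ : Fm) : Prop :=
  ∀ (A : Type) [BooleanAlgebra A] (box : Tm → Fm → A),
    IsFullLP CS box → ∀ θ : ℕ → A, evalFm box θ φ = ⊤


/-- Minimal evidence relation for CS0 in the two-element algebra. -/
inductive Ev : Tm → Fm → Prop where
  | cs : Ev (.const 0) phi0
  | app {s t φ ψ} : Ev s (φ.imp ψ) → Ev t φ → Ev (.app s t) ψ
  | suml {s t φ} : Ev s φ → Ev (.sum s t) φ
  | sumr {s t φ} : Ev t φ → Ev (.sum s t) φ
  | bang {t φ} : Ev t φ → Ev (.bang t) (.box t φ)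

lemma eval_phi0 {A : Type} [BooleanAlgebra A] (box : Tm → Fm → A) (θ : ℕ → A) :
    evalFm box θ phi0 = ⊤ := by
  simp [phi0, Fm.imp, Fm.and, evalFm, compl_sup_eq_top]

lemma Ev_jT (θ : ℕ → Prop) : ∀ t φ, Ev t φ → (evalFm Ev θ φ : Prop) := by
  intro t φ h
  induction h with
  | cs =>
      have := eval_phi0 (A := Prop) Ev θ
      rw [this]; trivial
  | app h1 h2 ih1 ih2 =>
      simp only [Fm.imp, evalFm] at ih1
      rcases ih1 with h | h
      · exact absurd ih2 h
      · exact h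
  | suml h ih => exact ih
  | sumr h ih => exact ih
  | bang h ih => exact h

lemma isFull_Ev : IsFullLP CS0 (fun t φ => (Ev t φ : Prop)) := by
  constructor
  · intro s t φ ψ ⟨h1, h2⟩; exact Ev.app h1 h2
  · rintro s t φ (h | h); exacts [Ev.suml h, Ev.sumr h]
  · intro t φ h; exact Ev.bang h
  · rintro c φ hc
    rcases hc with ⟨rfl, rfl⟩
    · exact eq_true Ev.cs
  · intro θ t φ h; exact Ev_jT θ t φ h

lemma Ev_top_false : ¬ Ev (.const 0) Fm.top := by
  intro h
  cases h

/-- **JReg is not validity preserving in the class of full LP_CS algebras**: for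
CS = {c:(p∧p→p)}, the equivalence (p∧p→p) ↔ ⊤ is valid in all full LP_CS algebras,
but c:(p∧p→p) ↔ c:⊤ is not. -/
theorem JReg_not_validity_preserving :
    FullValid CS0 (phi0.iff Fm.top) ∧
    ¬ FullValid CS0 ((Fm.box (.const 0) phi0).iff (Fm.box (.const 0) Fm.top)) := by
  constructor
  · intro A _ box hfull θ
    have h1 := eval_phi0 box θ
    simp [Fm.iff, Fm.imp, Fm.and, Fm.top, evalFm, h1, compl_sup_eq_top]
  · intro h
    have := h Prop (fun t φ => (Ev t φ : Prop)) isFull_Ev (fun _ => True)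
    simp only [Fm.iff, Fm.imp, Fm.and, evalFm] at this
    rw [eq_top_iff] at this
    have h2 := this trivial
    exact h2 (Or.inl fun h3 => h3.elim (fun hna => hna Ev.cs) Ev_top_false)
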